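/- arXiv:1612.03327 — 2 statements merged into one kernel-verified Lean document; each statement's English description precedes it below -/
import Mathlib

section
/- Let E be a Riesz space with more than one element such that the only order ideals of E are {0} and E. Then E is totally ordered and Archimedean, and hence isomorphic as a Riesz space to ℝ. -/
/-!
Every nonzero element `e` generates the whole space as an order ideal, i.e. `|y| ≤ c • |e|` for
every `y` and some real `c`. Applied to `e = (x - y)⁺`, this bounds the disjoint element
`(x - y)⁻` by a multiple of `(x - y)⁺`, forcing `(x - y)⁻ = 0`; so the order is total.
Applied to `e = |x|`, it bounds every `b` by a multiple of `|x|`, which rules out `n • |x| ≤ b`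
for all `n`; so `E` is Archimedean. Finally, fixing `e > 0`, every `x` satisfies
`|x - r • e| ≤ ε • e` for all `ε > 0` with `r = sSup {c | c • e ≤ x}`, hence `x = r • e`, and
`r ↦ r • e` is an order-preserving linear isomorphism `ℝ ≃ E`.
-/

variable {E : Type*} [Lattice E] [AddCommGroup E] [Module ℝ E]
  [CovariantClass E E (· + ·) (· ≤ ·)] [PosSMulMono ℝ E]

theorem isOrderedAddMonoid_of_addLeftMono {M : Type*} [AddCommMonoid M] [PartialOrder M]
    [AddLeftMono M] : IsOrderedAddMonoid M where
  add_le_add_left _ _ h c := add_le_add_left h c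

theorem eq_zero_of_abs_nonpos {α : Type*} [Lattice α] [AddGroup α] [AddLeftMono α] {a : α}
    (h : |a| ≤ 0) : a = 0 :=
  le_antisymm (abs_le'.1 h).1 (neg_nonpos.1 (abs_le'.1 h).2)

theorem abs_pos_of_ne_zero' {α : Type*} [Lattice α] [AddCommGroup α] [AddLeftMono α] {a : α}
    (ha : a ≠ 0) : 0 < |a| :=
  (abs_nonneg a).lt_of_ne' fun h => ha (eq_zero_of_abs_nonpos h.le)

section AbsSMul

variable {𝕜 M : Type*} [Ring 𝕜] [LinearOrder 𝕜] [IsOrderedRing 𝕜] [Lattice M] [AddCommGroup M]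
  [Module 𝕜 M] [PosSMulMono 𝕜 M]

theorem smul_le_abs_smul_abs (c : 𝕜) (y : M) : c • y ≤ |c| • |y| := by
  rcases le_total 0 c with hc | hc
  · rw [abs_of_nonneg hc]
    exact smul_le_smul_of_nonneg_left (le_abs_self y) hc
  · rw [abs_of_nonpos hc, ← neg_smul_neg]
    exact smul_le_smul_of_nonneg_left (neg_le_abs y) (neg_nonneg.2 hc)

theorem abs_smul_le (c : 𝕜) (y : M) : |c • y| ≤ |c| • |y| :=
  abs_le'.2 ⟨smul_le_abs_smul_abs c y, by simpa [← neg_smul] using smul_le_abs_smul_abs (-c) y⟩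

end AbsSMul

def IsOrderIdeal {M : Type*} [Lattice M] [AddCommGroup M] [Module ℝ M] (D : Submodule ℝ M) :
    Prop :=
  ∀ a ∈ D, ∀ x : M, |x| ≤ |a| → x ∈ D

section RieszSpace

-- `E` is only assumed `AddLeftMono`; these instances give access to the ordered-module API.
attribute [local instance] isOrderedAddMonoid_of_addLeftMono SMulPosMono.toSMulPosStrictMono

def principalOrderIdeal (e : E) : Submodule ℝ E where
  carrier := {y | ∃ c : ℝ, |y| ≤ c • |e|}
  zero_mem' := ⟨0, by simp⟩
  add_mem' := by
    rintro y z ⟨c, hy⟩ ⟨d, hz⟩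
    exact ⟨c + d, (abs_add_le y z).trans (add_smul c d |e| ▸ add_le_add hy hz)⟩
  smul_mem' := by
    rintro r y ⟨c, hy⟩
    refine ⟨|r| * c, (abs_smul_le r y).trans ?_⟩
    rw [mul_smul]
    exact smul_le_smul_of_nonneg_left hy (abs_nonneg r)

theorem mem_principalOrderIdeal {e y : E} :
    y ∈ principalOrderIdeal e ↔ ∃ c : ℝ, |y| ≤ c • |e| :=
  Iff.rfl

theorem mem_principalOrderIdeal_self (e : E) : e ∈ principalOrderIdeal e :=
  ⟨1, (one_smul ℝ |e|).ge⟩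

theorem isOrderIdeal_principalOrderIdeal (e : E) : IsOrderIdeal (principalOrderIdeal e) := by
  rintro a ⟨c, ha⟩ x hx
  exact ⟨c, hx.trans ha⟩

theorem principalOrderIdeal_eq_top
    (hideals : ∀ D : Submodule ℝ E, IsOrderIdeal D → D = ⊥ ∨ D = ⊤) {e : E} (he : e ≠ 0) :
    principalOrderIdeal e = ⊤ := by
  refine (hideals _ (isOrderIdeal_principalOrderIdeal e)).resolve_left fun h => he ?_
  simpa [h] using mem_principalOrderIdeal_self e

theorem exists_abs_le_smul_abs {e : E} (h : principalOrderIdeal e = ⊤) (y : E) :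
    ∃ c : ℝ, |y| ≤ c • |e| :=
  mem_principalOrderIdeal.1 (h ▸ Submodule.mem_top)

theorem eq_zero_of_le_smul_of_inf_eq_zero {a b : E} (ha : 0 ≤ a) (hab : a ⊓ b = 0) {c : ℝ}
    (h : a ≤ c • b) : a = 0 := by
  have hb : 0 ≤ b := hab ▸ inf_le_right
  have hc : 0 < max c 1 := lt_max_of_lt_right one_pos
  refine le_antisymm ?_ ha
  calc a = a ⊓ c • b := (inf_eq_left.2 h).symm
    _ ≤ max c 1 • a ⊓ max c 1 • b :=
        inf_le_inf (le_smul_of_one_le_left ha (le_max_right c 1))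
          (smul_le_smul_of_nonneg_right (le_max_left c 1) hb)
    _ = max c 1 • (a ⊓ b) := ((OrderIso.smulRight hc).map_inf a b).symm
    _ = 0 := by rw [hab, smul_zero]

theorem le_total_of_principalOrderIdeal_eq_top
    (h : ∀ e : E, e ≠ 0 → principalOrderIdeal e = ⊤) (x y : E) : x ≤ y ∨ y ≤ x := by
  by_cases hpos : (x - y)⁺ = 0
  · exact .inl (sub_nonpos.1 (posPart_eq_zero.1 hpos))
  · obtain ⟨c, hc⟩ := exists_abs_le_smul_abs (h _ hpos) (x - y)⁻
    rw [abs_of_nonneg (negPart_nonneg _), abs_of_nonneg (posPart_nonneg _)] at hc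
    have hdisj : (x - y)⁻ ⊓ (x - y)⁺ = 0 := inf_comm (x - y)⁺ _ ▸ posPart_inf_negPart_eq_zero _
    exact .inr (sub_nonneg.1 (negPart_eq_zero.1
      (eq_zero_of_le_smul_of_inf_eq_zero (negPart_nonneg _) hdisj hc)))

theorem eq_zero_of_forall_zsmul_le_of_principalOrderIdeal_eq_top
    (h : ∀ e : E, e ≠ 0 → principalOrderIdeal e = ⊤) (x b : E) (hb : ∀ n : ℤ, n • x ≤ b) :
    x = 0 := by
  by_contra hx
  have hx' : 0 < |x| := abs_pos_of_ne_zero' hx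
  obtain ⟨c, hc⟩ := exists_abs_le_smul_abs (h x hx) b
  have hnb : ∀ n : ℤ, n • |x| ≤ b := by
    intro n
    rcases le_total_of_principalOrderIdeal_eq_top h 0 x with h0 | h0
    · rw [abs_of_nonneg h0]
      exact hb n
    · rw [abs_of_nonpos h0, zsmul_neg, ← neg_zsmul]
      exact hb (-n)
  obtain ⟨n, hn⟩ := exists_nat_gt c
  have : (n : ℝ) • |x| ≤ c • |x| := by
    rw [← Int.cast_natCast, Int.cast_smul_eq_zsmul]
    exact (hnb n).trans ((le_abs_self b).trans hc)
  exact hn.not_ge ((smul_le_smul_iff_of_pos_right hx').1 this)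

theorem eq_zero_of_forall_abs_le_smul
    (harch : ∀ x b : E, (∀ n : ℤ, n • x ≤ b) → x = 0) {e z : E} (he : 0 ≤ e)
    (h : ∀ ε : ℝ, 0 < ε → |z| ≤ ε • e) : z = 0 := by
  refine eq_zero_of_abs_nonpos (harch |z| e fun n => ?_).le
  rw [← Int.cast_smul_eq_zsmul ℝ]
  rcases le_or_gt (n : ℝ) 0 with hn | hn
  · exact (smul_nonpos_of_nonpos_of_nonneg hn (abs_nonneg z)).trans he
  · calc (n : ℝ) • |z| ≤ (n : ℝ) • ((n : ℝ)⁻¹ • e) :=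
          smul_le_smul_of_nonneg_left (h _ (inv_pos.2 hn)) hn.le
      _ = e := smul_inv_smul₀ hn.ne' e

theorem exists_smul_eq_of_archimedean (htot : ∀ x y : E, x ≤ y ∨ y ≤ x)
    (harch : ∀ x b : E, (∀ n : ℤ, n • x ≤ b) → x = 0) {e : E} (he : 0 < e)
    (hunit : principalOrderIdeal e = ⊤) (x : E) : ∃ r : ℝ, r • e = x := by
  obtain ⟨C, hC⟩ := exists_abs_le_smul_abs hunit x
  rw [abs_of_pos he] at hC
  let S : Set ℝ := {c | c • e ≤ x}
  have hS : S.Nonempty := ⟨-C, show (-C) • e ≤ x by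
    rw [neg_smul]
    exact (neg_le_neg hC).trans (neg_le.1 (neg_le_abs x))⟩
  have hSbdd : BddAbove S := ⟨C, fun c (hc : c • e ≤ x) =>
    (smul_le_smul_iff_of_pos_right he).1 (hc.trans ((le_abs_self x).trans hC))⟩
  refine ⟨sSup S, (sub_eq_zero.1 (eq_zero_of_forall_abs_le_smul harch he.le fun ε hε => ?_)).symm⟩
  refine abs_le'.2 ⟨?_, ?_⟩
  · rcases htot x ((sSup S + ε) • e) with hle | hle
    · rw [add_smul] at hle
      exact sub_le_iff_le_add'.2 hle
    · exact absurd (le_csSup hSbdd hle) (lt_add_of_pos_right _ hε).not_ge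
  · obtain ⟨c, hc, hlt⟩ := exists_lt_of_lt_csSup hS (sub_lt_self (sSup S) hε)
    have hle : (sSup S - ε) • e ≤ x := ((smul_le_smul_iff_of_pos_right he).2 hlt.le).trans hc
    rw [sub_smul, sub_le_iff_le_add] at hle
    rwa [neg_sub, sub_le_iff_le_add, add_comm]

theorem exists_linearEquiv_real_le_iff {e : E} (he : 0 < e)
    (hspan : ∀ x : E, ∃ r : ℝ, r • e = x) :
    ∃ φ : E ≃ₗ[ℝ] ℝ, ∀ x y : E, x ≤ y ↔ φ x ≤ φ y := by
  let ψ : ℝ ≃ₗ[ℝ] E :=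
    .ofBijective (LinearMap.toSpanSingleton ℝ E e) ⟨smul_left_injective ℝ he.ne', hspan⟩
  refine ⟨ψ.symm, fun x y => ?_⟩
  conv_lhs => rw [← ψ.apply_symm_apply x, ← ψ.apply_symm_apply y]
  exact smul_le_smul_iff_of_pos_right he

end RieszSpace

theorem simple_riesz_space_is_real (hnt : Nontrivial E)
    (hideals : ∀ D : Submodule ℝ E,
      (∀ a ∈ D, ∀ x : E, |x| ≤ |a| → x ∈ D) → D = ⊥ ∨ D = ⊤) :
    (∀ x y : E, x ≤ y ∨ y ≤ x) ∧
    (∀ x b : E, (∀ n : ℤ, n • x ≤ b) → x = 0) ∧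
    (∃ φ : E ≃ₗ[ℝ] ℝ, ∀ x y : E, x ≤ y ↔ φ x ≤ φ y) := by
  have hprincipal (e : E) (he : e ≠ 0) : principalOrderIdeal e = ⊤ :=
    principalOrderIdeal_eq_top hideals he
  have htot := le_total_of_principalOrderIdeal_eq_top hprincipal
  have harch := eq_zero_of_forall_zsmul_le_of_principalOrderIdeal_eq_top hprincipal
  obtain ⟨u, v, huv⟩ := hnt
  have he : 0 < |u - v| := abs_pos_of_ne_zero' (sub_ne_zero.2 huv)
  exact ⟨htot, harch, exists_linearEquiv_real_le_iff he
    (exists_smul_eq_of_archimedean htot harch he (hprincipal _ he.ne'))⟩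
end

section
/- Let E be an Archimedean Riesz space with order unit e, and let a ∈ E with a ≠ 0. Then there exists a Riesz homomorphism φ : E → ℝ with φ(e) = 1 and φ(a) ≠ 0. -/
/-!
Since `E` is Archimedean, `|a| ≤ ε • e` fails for some `ε > 0`, so `z := |a| - ε • e` has
`z⁺ ≠ 0`. As `z⁺ ⊓ z⁻ = 0` and `e` is an order unit, the ideal generated by `z⁻` misses `e`; by
Zorn it lies in an ideal `M` maximal among those missing `e`. Maximality makes `M` prime
(`x⁺ ∈ M` or `x⁻ ∈ M`), so `E ⧸ M` is totally ordered, and then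
`φ x := inf {s | x ≤ s • e in E ⧸ M}` is a Riesz homomorphism with `φ e = 1` that vanishes on
`M`. Finally `0 = φ z⁻ = (ε - φ |a|)⁺` gives `|φ a| = φ |a| ≥ ε`.
-/

open LatticeOrderedAddCommGroup

lemma LatticeOrderedAddCommGroup.IsSolid.mem_of_nonneg_of_le {α : Type*} [Lattice α]
    [AddCommGroup α] [AddLeftMono α] {s : Set α} {x m : α} (hs : IsSolid s) (hx : 0 ≤ x)
    (hxm : x ≤ m) (hm : m ∈ s) : x ∈ s :=
  hs hm (by rw [abs_of_nonneg hx]; exact hxm.trans (le_abs_self m))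

section RieszSpace

variable {α : Type*} [Lattice α] [AddCommGroup α] [Module ℝ α]

structure IsOrderUnit (e : α) : Prop where
  nonneg : 0 ≤ e
  exists_abs_le : ∀ x : α, ∃ n : ℕ, |x| ≤ (n : ℝ) • e

lemma abs_smul_le_s17 [PosSMulMono ℝ α] (c : ℝ) (x : α) : |c • x| ≤ |c| • |x| := by
  have key : ∀ c : ℝ, 0 ≤ c → |c • x| ≤ c • |x| := fun c hc =>
    abs_le'.2 ⟨smul_le_smul_of_nonneg_left (le_abs_self x) hc,
      by rw [← smul_neg]; exact smul_le_smul_of_nonneg_left (neg_le_abs x) hc⟩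
  rcases le_total 0 c with hc | hc
  · simpa [abs_of_nonneg hc] using key c hc
  · simpa [abs_of_nonpos hc] using key (-c) (neg_nonneg.2 hc)

lemma smul_inf_of_pos [PosSMulMono ℝ α] {c : ℝ} (hc : 0 < c) (x y : α) :
    c • (x ⊓ y) = c • x ⊓ c • y :=
  (OrderIso.smulRight hc).map_inf x y

lemma exists_pos_not_abs_le_smul [PosSMulMono ℝ α] {e x : α} (he : 0 ≤ e)
    (hArch : ∀ x b : α, (∀ n : ℤ, n • x ≤ b) → x = 0) (hx : x ≠ 0) :
    ∃ ε : ℝ, 0 < ε ∧ ¬ |x| ≤ ε • e := by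
  by_contra! hsmall
  refine hx (hArch x e fun n => ?_)
  rcases eq_or_ne n 0 with rfl | hn
  · simpa using he
  have hn' : (0 : ℝ) < |(n : ℝ)| := abs_pos.2 (Int.cast_ne_zero.2 hn)
  calc n • x = (n : ℝ) • x := (Int.cast_smul_eq_zsmul ℝ n x).symm
    _ ≤ |(n : ℝ) • x| := le_abs_self _
    _ ≤ |(n : ℝ)| • |x| := abs_smul_le_s17 _ _
    _ ≤ e := (le_inv_smul_iff_of_pos hn').1 (hsmall _ (inv_pos.2 hn'))

def LEMod (M : Submodule ℝ α) (x y : α) : Prop := ∃ m ∈ M, x ≤ y + m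

namespace LEMod

variable {M : Submodule ℝ α} {x y z x' y' : α}

lemma of_le (h : x ≤ y) : LEMod M x y := ⟨0, M.zero_mem, by rwa [add_zero]⟩

lemma smul [PosSMulMono ℝ α] (h : LEMod M x y) {c : ℝ} (hc : 0 ≤ c) :
    LEMod M (c • x) (c • y) := by
  obtain ⟨m, hm, hle⟩ := h
  exact ⟨c • m, M.smul_mem c hm, by rw [← smul_add]; exact smul_le_smul_of_nonneg_left hle hc⟩

variable [IsOrderedAddMonoid α]

lemma add (h : LEMod M x y) (h' : LEMod M x' y') : LEMod M (x + x') (y + y') := by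
  obtain ⟨m, hm, hle⟩ := h
  obtain ⟨m', hm', hle'⟩ := h'
  exact ⟨m + m', M.add_mem hm hm', by grw [hle, hle']; exact (add_add_add_comm ..).le⟩

lemma trans (h : LEMod M x y) (h' : LEMod M y z) : LEMod M x z := by
  obtain ⟨m, hm, hle⟩ := h
  obtain ⟨m', hm', hle'⟩ := h'
  exact ⟨m' + m, M.add_mem hm' hm, by grw [hle, hle', add_assoc]⟩

lemma neg (h : LEMod M x y) : LEMod M (-y) (-x) := by
  obtain ⟨m, hm, hle⟩ := h
  exact ⟨m, hm, by rw [← sub_nonneg] at hle ⊢; convert hle using 1; abel⟩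

lemma sup_le (hM : IsSolid (M : Set α)) (h : LEMod M x z) (h' : LEMod M y z) :
    LEMod M (x ⊔ y) z := by
  obtain ⟨m, hm, hle⟩ := h
  obtain ⟨m', hm', hle'⟩ := h'
  refine ⟨|m| + |m'|, M.add_mem (hM hm (abs_abs m).le) (hM hm' (abs_abs m').le),
    _root_.sup_le (hle.trans ?_) (hle'.trans ?_)⟩
  · grw [← le_add_of_nonneg_right (abs_nonneg m'), ← le_abs_self m]
  · grw [← le_add_of_nonneg_left (abs_nonneg m), ← le_abs_self m']

lemma le_inf (hM : IsSolid (M : Set α)) (h : LEMod M x y) (h' : LEMod M x z) :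
    LEMod M x (y ⊓ z) := by
  obtain ⟨m, hm, hle⟩ := h
  obtain ⟨m', hm', hle'⟩ := h'
  refine ⟨|m| + |m'|, M.add_mem (hM hm (abs_abs m).le) (hM hm' (abs_abs m').le), ?_⟩
  rw [inf_add]
  refine _root_.le_inf (hle.trans ?_) (hle'.trans ?_)
  · grw [← le_add_of_nonneg_right (abs_nonneg m'), ← le_abs_self m]
  · grw [← le_add_of_nonneg_left (abs_nonneg m), ← le_abs_self m']

end LEMod

lemma exists_le_maximal_isSolid_notMem {J : Submodule ℝ α} {e : α} (hJ : IsSolid (J : Set α))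
    (heJ : e ∉ J) :
    ∃ M, J ≤ M ∧ Maximal (fun N : Submodule ℝ α => IsSolid (N : Set α) ∧ e ∉ N) M := by
  refine zorn_le_nonempty₀ _ (fun c hc hchain N hN => ?_) J ⟨hJ, heJ⟩
  have mem_sSup (x : α) : x ∈ sSup c ↔ ∃ N' ∈ c, x ∈ N' :=
    Submodule.mem_sSup_of_directed ⟨N, hN⟩ hchain.directedOn
  refine ⟨sSup c, ⟨fun x hx y hy => ?_, fun he => ?_⟩, fun _ => le_sSup⟩
  · obtain ⟨N', hN', hxN'⟩ := (mem_sSup x).1 hx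
    exact (mem_sSup y).2 ⟨N', hN', (hc hN').1 hxN' hy⟩
  · obtain ⟨N', hN', heN'⟩ := (mem_sSup e).1 he
    exact (hc hN').2 heN'

section Ideal

variable [IsOrderedAddMonoid α] [PosSMulMono ℝ α]

lemma eq_zero_of_le_smul_of_inf_eq_zero_s17 {x y : α} {c : ℝ} (hx : 0 ≤ x) (hy : 0 ≤ y)
    (hxy : x ⊓ y = 0) (h : x ≤ c • y) : x = 0 := by
  set k := max c 1
  have hk : 0 < k := lt_max_of_lt_right one_pos
  have hxk : x ≤ k • x := by
    simpa using smul_le_smul_of_nonneg_right (le_max_right c 1) hx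
  have hyk : x ≤ k • y := h.trans (smul_le_smul_of_nonneg_right (le_max_left c 1) hy)
  refine le_antisymm ?_ hx
  calc x ≤ k • x ⊓ k • y := le_inf hxk hyk
    _ = 0 := by rw [← smul_inf_of_pos hk, hxy, smul_zero]

def idealAdjoin (M : Submodule ℝ α) (z : α) : Submodule ℝ α where
  carrier := {x | ∃ c : ℝ, LEMod M |x| (c • |z|)}
  zero_mem' := ⟨0, .of_le (by simp)⟩
  add_mem' := by
    rintro x y ⟨c, hx⟩ ⟨d, hy⟩
    exact ⟨c + d, (LEMod.of_le (abs_add_le x y)).trans (by rw [add_smul]; exact hx.add hy)⟩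
  smul_mem' := by
    rintro r x ⟨c, hx⟩
    refine ⟨|r| * c, (LEMod.of_le (abs_smul_le_s17 r x)).trans ?_⟩
    rw [mul_smul]
    exact hx.smul (abs_nonneg r)

variable {M : Submodule ℝ α} {e z : α}

lemma le_idealAdjoin (hM : IsSolid (M : Set α)) : M ≤ idealAdjoin M z :=
  fun x hx => ⟨0, |x|, hM hx (abs_abs x).le, by simp⟩

lemma self_mem_idealAdjoin : z ∈ idealAdjoin M z := ⟨1, .of_le (by rw [one_smul])⟩

lemma isSolid_idealAdjoin : IsSolid (idealAdjoin M z : Set α) :=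
  fun _ ⟨c, hx⟩ _ hy => ⟨c, (LEMod.of_le hy).trans hx⟩

lemma notMem_idealAdjoin_bot_negPart (he : IsOrderUnit e) (hz : z⁺ ≠ 0) :
    e ∉ idealAdjoin ⊥ z⁻ := by
  rintro ⟨c, m, hm, hle⟩
  rw [Submodule.mem_bot] at hm
  rw [hm, add_zero, abs_of_nonneg he.nonneg, abs_of_nonneg (negPart_nonneg z)] at hle
  obtain ⟨n, hn⟩ := he.exists_abs_le z⁺
  refine hz (eq_zero_of_le_smul_of_inf_eq_zero_s17 (posPart_nonneg z) (negPart_nonneg z)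
    (posPart_inf_negPart_eq_zero z) (c := n * c) ?_)
  calc z⁺ ≤ |z⁺| := le_abs_self _
    _ ≤ (n : ℝ) • e := hn
    _ ≤ (n : ℝ) • c • z⁻ := smul_le_smul_of_nonneg_left hle (Nat.cast_nonneg n)
    _ = ((n : ℝ) * c) • z⁻ := smul_smul ..

lemma mem_idealAdjoin_of_maximal
    (hM : Maximal (fun N : Submodule ℝ α => IsSolid (N : Set α) ∧ e ∉ N) M) (hz : z ∉ M) :
    e ∈ idealAdjoin M z := by
  by_contra he
  exact hz (hM.2 ⟨isSolid_idealAdjoin, he⟩ (le_idealAdjoin hM.1.1) self_mem_idealAdjoin)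

lemma posPart_mem_or_negPart_mem_of_maximal (he : 0 ≤ e)
    (hM : Maximal (fun N : Submodule ℝ α => IsSolid (N : Set α) ∧ e ∉ N) M) (x : α) :
    x⁺ ∈ M ∨ x⁻ ∈ M := by
  by_contra! hx
  obtain ⟨c, hc⟩ := mem_idealAdjoin_of_maximal hM hx.1
  obtain ⟨d, hd⟩ := mem_idealAdjoin_of_maximal hM hx.2
  rw [abs_of_nonneg he, abs_of_nonneg (posPart_nonneg x)] at hc
  rw [abs_of_nonneg he, abs_of_nonneg (negPart_nonneg x)] at hd
  set k := max (max c d) 1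
  have hk : 0 < k := lt_max_of_lt_right one_pos
  have hck : c ≤ k := le_max_of_le_left (le_max_left c d)
  have hdk : d ≤ k := le_max_of_le_left (le_max_right c d)
  have hpos := hc.trans (.of_le (smul_le_smul_of_nonneg_right hck (posPart_nonneg x)))
  have hneg := hd.trans (.of_le (smul_le_smul_of_nonneg_right hdk (negPart_nonneg x)))
  -- `x⁺` and `x⁻` are disjoint, so `e` lies below an element of `M`
  obtain ⟨m, hm, hem⟩ := hpos.le_inf hM.1.1 hneg
  rw [← smul_inf_of_pos hk, posPart_inf_negPart_eq_zero, smul_zero, zero_add] at hem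
  exact hM.1.2 (hM.1.1.mem_of_nonneg_of_le he hem hm)

lemma LEMod.total_of_maximal (he : 0 ≤ e)
    (hM : Maximal (fun N : Submodule ℝ α => IsSolid (N : Set α) ∧ e ∉ N) M) (x y : α) :
    LEMod M x y ∨ LEMod M y x :=
  (posPart_mem_or_negPart_mem_of_maximal he hM (x - y)).imp
    (fun h => ⟨_, h, sub_le_iff_le_add'.1 (le_posPart _)⟩)
    (fun h => ⟨_, h, sub_le_iff_le_add'.1 (by rw [← neg_sub]; exact neg_le_negPart _)⟩)

end Ideal

section Gauge

variable {M : Submodule ℝ α} {e x y : α} {r s : ℝ}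

noncomputable def gaugeMod (M : Submodule ℝ α) (e x : α) : ℝ := sInf {s : ℝ | LEMod M x (s • e)}

lemma nonempty_leMod_smul (he : IsOrderUnit e) (x : α) :
    {s : ℝ | LEMod M x (s • e)}.Nonempty := by
  obtain ⟨n, hn⟩ := he.exists_abs_le x
  exact ⟨n, .of_le ((le_abs_self x).trans hn)⟩

variable [IsOrderedAddMonoid α] [PosSMulMono ℝ α]

lemma le_of_leMod_smul (he : 0 ≤ e) (hM : IsSolid (M : Set α)) (heM : e ∉ M)
    (h : LEMod M (r • e) (s • e)) : r ≤ s := by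
  by_contra! hsr
  obtain ⟨m, hm, hle⟩ := h
  have hrs : 0 < r - s := sub_pos.2 hsr
  have hmem : (r - s) • e ∈ M := hM.mem_of_nonneg_of_le (smul_nonneg hrs.le he)
    (by rw [sub_smul]; exact sub_le_iff_le_add'.2 hle) hm
  exact heM (by simpa [smul_smul, inv_mul_cancel₀ hrs.ne'] using M.smul_mem (r - s)⁻¹ hmem)

lemma bddBelow_leMod_smul (he : IsOrderUnit e) (hM : IsSolid (M : Set α)) (heM : e ∉ M)
    (x : α) : BddBelow {s : ℝ | LEMod M x (s • e)} := by
  obtain ⟨n, hn⟩ := he.exists_abs_le x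
  refine ⟨-n, fun s hs => le_of_leMod_smul he.nonneg hM heM ((LEMod.of_le ?_).trans hs)⟩
  rw [neg_smul, neg_le]
  exact (neg_le_abs x).trans hn

lemma gaugeMod_le (he : IsOrderUnit e) (hM : IsSolid (M : Set α)) (heM : e ∉ M)
    (h : LEMod M x (s • e)) : gaugeMod M e x ≤ s :=
  csInf_le (bddBelow_leMod_smul he hM heM x) h

lemma le_gaugeMod (he : IsOrderUnit e) (hM : IsSolid (M : Set α)) (heM : e ∉ M)
    (h : LEMod M (r • e) x) : r ≤ gaugeMod M e x :=
  le_csInf (nonempty_leMod_smul he x) fun _ hs => le_of_leMod_smul he.nonneg hM heM (h.trans hs)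

lemma leMod_of_gaugeMod_lt (he : IsOrderUnit e) (h : gaugeMod M e x < s) :
    LEMod M x (s • e) := by
  obtain ⟨t, ht, hts⟩ := exists_lt_of_csInf_lt (nonempty_leMod_smul he x) h
  exact ht.trans (.of_le (smul_le_smul_of_nonneg_right hts.le he.nonneg))

lemma leMod_of_lt_gaugeMod (he : IsOrderUnit e) (hM : IsSolid (M : Set α)) (heM : e ∉ M)
    (htot : ∀ x y, LEMod M x y ∨ LEMod M y x) (h : r < gaugeMod M e x) : LEMod M (r • e) x :=
  (htot _ _).resolve_right fun h' => (gaugeMod_le he hM heM h').not_gt h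

lemma gaugeMod_eq_of_forall (he : IsOrderUnit e) (hM : IsSolid (M : Set α)) (heM : e ∉ M)
    {a : ℝ} (hlow : ∀ r < a, LEMod M (r • e) x) (hup : ∀ s, a < s → LEMod M x (s • e)) :
    gaugeMod M e x = a :=
  le_antisymm (le_of_forall_gt_imp_ge_of_dense fun s hs => gaugeMod_le he hM heM (hup s hs))
    (le_of_forall_lt_imp_le_of_dense fun r hr => le_gaugeMod he hM heM (hlow r hr))

lemma gaugeMod_self (he : IsOrderUnit e) (hM : IsSolid (M : Set α)) (heM : e ∉ M) :
    gaugeMod M e e = 1 :=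
  gaugeMod_eq_of_forall he hM heM
    (fun _ hr => .of_le (by simpa using smul_le_smul_of_nonneg_right hr.le he.nonneg))
    (fun _ hs => .of_le (by simpa using smul_le_smul_of_nonneg_right hs.le he.nonneg))

lemma gaugeMod_of_mem (he : IsOrderUnit e) (hM : IsSolid (M : Set α)) (heM : e ∉ M)
    (hx : x ∈ M) : gaugeMod M e x = 0 :=
  gaugeMod_eq_of_forall he hM heM
    (fun _ hr => ⟨-x, M.neg_mem hx, by
      rw [add_neg_cancel]; exact smul_nonpos_of_nonpos_of_nonneg hr.le he.nonneg⟩)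
    (fun _ hs => ⟨x, hx, le_add_of_nonneg_left (smul_nonneg hs.le he.nonneg)⟩)

lemma gaugeMod_add (he : IsOrderUnit e) (hM : IsSolid (M : Set α)) (heM : e ∉ M)
    (htot : ∀ x y, LEMod M x y ∨ LEMod M y x) (x y : α) :
    gaugeMod M e (x + y) = gaugeMod M e x + gaugeMod M e y := by
  refine gaugeMod_eq_of_forall he hM heM (fun r hr => ?_) (fun s hs => ?_)
  · obtain ⟨r₁, hr₁, hr₁x⟩ := exists_between (sub_lt_iff_lt_add.2 hr)
    have h := (leMod_of_lt_gaugeMod he hM heM htot hr₁x).add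
      (leMod_of_lt_gaugeMod he hM heM htot (sub_lt_comm.1 hr₁))
    rwa [← add_smul, add_sub_cancel] at h
  · obtain ⟨s₁, hxs₁, hs₁⟩ := exists_between (lt_sub_iff_add_lt.2 hs)
    have h := (leMod_of_gaugeMod_lt he hxs₁).add (leMod_of_gaugeMod_lt he (lt_sub_comm.1 hs₁))
    rwa [← add_smul, add_sub_cancel] at h

lemma gaugeMod_neg (he : IsOrderUnit e) (hM : IsSolid (M : Set α)) (heM : e ∉ M)
    (htot : ∀ x y, LEMod M x y ∨ LEMod M y x) (x : α) :
    gaugeMod M e (-x) = -gaugeMod M e x := by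
  refine gaugeMod_eq_of_forall he hM heM (fun r hr => ?_) (fun s hs => ?_)
  · simpa using (leMod_of_gaugeMod_lt he (lt_neg_of_lt_neg hr)).neg
  · simpa using (leMod_of_lt_gaugeMod he hM heM htot (neg_lt.1 hs)).neg

lemma gaugeMod_smul_of_pos (he : IsOrderUnit e) (hM : IsSolid (M : Set α)) (heM : e ∉ M)
    (htot : ∀ x y, LEMod M x y ∨ LEMod M y x) {c : ℝ} (hc : 0 < c) (x : α) :
    gaugeMod M e (c • x) = c * gaugeMod M e x := by
  refine gaugeMod_eq_of_forall he hM heM (fun r hr => ?_) (fun s hs => ?_)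
  · have h := (leMod_of_lt_gaugeMod he hM heM htot ((div_lt_iff₀' hc).2 hr)).smul hc.le
    rwa [smul_smul, mul_div_cancel₀ _ hc.ne'] at h
  · have h := (leMod_of_gaugeMod_lt he ((lt_div_iff₀' hc).2 hs)).smul hc.le
    rwa [smul_smul, mul_div_cancel₀ _ hc.ne'] at h

lemma gaugeMod_smul (he : IsOrderUnit e) (hM : IsSolid (M : Set α)) (heM : e ∉ M)
    (htot : ∀ x y, LEMod M x y ∨ LEMod M y x) (c : ℝ) (x : α) :
    gaugeMod M e (c • x) = c * gaugeMod M e x := by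
  rcases lt_trichotomy c 0 with hc | rfl | hc
  · rw [← neg_neg (c • x), ← neg_smul, gaugeMod_neg he hM heM htot,
      gaugeMod_smul_of_pos he hM heM htot (neg_pos.2 hc), neg_mul, neg_neg]
  · rw [zero_smul, zero_mul, gaugeMod_of_mem he hM heM M.zero_mem]
  · exact gaugeMod_smul_of_pos he hM heM htot hc x

lemma gaugeMod_sup (he : IsOrderUnit e) (hM : IsSolid (M : Set α)) (heM : e ∉ M)
    (htot : ∀ x y, LEMod M x y ∨ LEMod M y x) (x y : α) :
    gaugeMod M e (x ⊔ y) = gaugeMod M e x ⊔ gaugeMod M e y := by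
  refine gaugeMod_eq_of_forall he hM heM (fun r hr => ?_) (fun s hs => ?_)
  · rcases lt_sup_iff.1 hr with hr | hr
    · exact (leMod_of_lt_gaugeMod he hM heM htot hr).trans (.of_le le_sup_left)
    · exact (leMod_of_lt_gaugeMod he hM heM htot hr).trans (.of_le le_sup_right)
  · exact (leMod_of_gaugeMod_lt he (sup_lt_iff.1 hs).1).sup_le hM
      (leMod_of_gaugeMod_lt he (sup_lt_iff.1 hs).2)

lemma exists_riesz_hom_of_total (he : IsOrderUnit e) (hM : IsSolid (M : Set α)) (heM : e ∉ M)
    (htot : ∀ x y, LEMod M x y ∨ LEMod M y x) :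
    ∃ φ : α →ₗ[ℝ] ℝ, (∀ x y, φ (x ⊔ y) = φ x ⊔ φ y) ∧ φ e = 1 ∧ ∀ x ∈ M, φ x = 0 :=
  ⟨{ toFun := gaugeMod M e
     map_add' := gaugeMod_add he hM heM htot
     map_smul' := gaugeMod_smul he hM heM htot },
    gaugeMod_sup he hM heM htot, gaugeMod_self he hM heM,
    fun _ hx => gaugeMod_of_mem he hM heM hx⟩

end Gauge

end RieszSpace

variable {E : Type*} [Lattice E] [AddCommGroup E] [Module ℝ E]
  [CovariantClass E E (· + ·) (· ≤ ·)] [PosSMulMono ℝ E]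

theorem exists_riesz_hom_to_real (e : E) (he0 : 0 ≤ e)
    (he : ∀ x : E, ∃ n : ℕ, |x| ≤ (n : ℝ) • e)
    (hArch : ∀ x b : E, (∀ n : ℤ, n • x ≤ b) → x = 0)
    (a : E) (ha : a ≠ 0) :
    ∃ φ : E →ₗ[ℝ] ℝ, (∀ x y : E, φ (x ⊔ y) = φ x ⊔ φ y) ∧ φ e = 1 ∧ φ a ≠ 0 := by
  have : IsOrderedAddMonoid E := { add_le_add_left := fun _ _ h c => add_le_add_left h c }
  have hunit : IsOrderUnit e := ⟨he0, he⟩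
  obtain ⟨ε, hε, hεa⟩ := exists_pos_not_abs_le_smul he0 hArch ha
  set z := |a| - ε • e
  have hz : z⁺ ≠ 0 := by rwa [Ne, posPart_eq_zero, sub_nonpos]
  obtain ⟨M, hzM, hM⟩ := exists_le_maximal_isSolid_notMem isSolid_idealAdjoin
    (notMem_idealAdjoin_bot_negPart hunit hz)
  obtain ⟨φ, hφsup, hφe, hφM⟩ :=
    exists_riesz_hom_of_total hunit hM.1.1 hM.1.2 (LEMod.total_of_maximal he0 hM)
  refine ⟨φ, hφsup, hφe, fun hφa => ?_⟩
  have hφabs : φ |a| = 0 := by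
    change φ (a ⊔ -a) = 0
    rw [hφsup, map_neg, hφa, neg_zero, sup_idem]
  have hφz : φ z⁻ = 0 := hφM _ (hzM self_mem_idealAdjoin)
  rw [negPart_def, hφsup, map_neg, map_zero, map_sub, hφabs, map_smul, hφe] at hφz
  simp only [smul_eq_mul, mul_one, zero_sub, neg_neg, sup_eq_right] at hφz
  linarith
end
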